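/- arXiv:2306.15233 — 2 statements merged into one kernel-verified Lean document; each statement's English description precedes it below -/
import Mathlib

section
/- Fix integers B and M with M(B^2-4M) ≠ 0. If f = ax^4 + Bx^2y^2 + cy^4 with a, c ∈ ℚ, ac = M, is everywhere locally soluble (i.e., z^2 = f(x,y) has a nontrivial ℚ_v-point for every place v of ℚ) and a is an integer with 0 ≤ ord_p(a) ≤ 1 for every prime p, then c is also an integer. -/
/-!
Since `a c = M ∈ ℤ` and `ord_p a ≤ 1`, a prime `p` with `ord_p c < 0` must have `ord_p a = 1` and
`ord_p c = -1`. Over `ℚ_p` the terms `a x⁴` and `c y⁴` then have valuations `≡ 1` and `≡ 3 (mod 4)`,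
and the smaller of the two is strictly below the valuation of `B x² y²`; so `f(x, y)` has odd
valuation and cannot be a square, contradicting solubility at `p`.
-/

theorem Rat.exists_int_eq_of_forall_padicValRat_nonneg {q : ℚ}
    (h : ∀ p : ℕ, p.Prime → 0 ≤ padicValRat p q) : ∃ n : ℤ, q = n := by
  suffices hden : q.den = 1 from ⟨q.num, (Rat.coe_int_num_of_den_eq_one hden).symm⟩
  by_contra hden
  set p := q.den.minFac
  have hp : p.Prime := Nat.minFac_prime hden
  have := Fact.mk hp
  have hp_den : p ∣ q.den := Nat.minFac_dvd _
  have hp_num : ¬ (p : ℤ) ∣ q.num := fun hnum =>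
    hp.not_dvd_one (q.reduced ▸ Nat.dvd_gcd (Int.natCast_dvd.mp hnum) hp_den)
  have hval := h p hp
  rw [padicValRat_def, padicValInt.eq_zero_of_not_dvd hp_num] at hval
  have hval_den := one_le_padicValNat_of_dvd q.den_nz hp_den
  omega

namespace AddValuation

variable {R : Type*} [Ring R]

theorem map_sq_ne_of_odd (v : AddValuation R (WithTop ℤ)) (z : R) {n : ℤ} (hn : Odd n) :
    v (z ^ 2) ≠ n := by
  rw [v.map_pow]
  cases v z with
  | top => simp [two_nsmul]
  | coe k =>
    norm_cast
    rintro rfl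
    exact Int.not_odd_iff_even.mpr (even_two_mul k) (by simpa using hn)

end AddValuation

namespace Padic

variable {p : ℕ} [Fact p.Prime]

theorem exists_addValuation_eq_coe {x : ℚ_[p]} (hx : x ≠ 0) : ∃ m : ℤ, addValuation x = m :=
  ⟨x.valuation, addValuation.apply hx⟩

theorem addValuation_intCast_nonneg (n : ℤ) : 0 ≤ addValuation (n : ℚ_[p]) := by
  obtain rfl | hn := eq_or_ne n 0
  · simp
  · rw [addValuation.apply (by exact_mod_cast hn), valuation_intCast]
    exact_mod_cast Nat.zero_le _

theorem addValuation_mul_pow {A x : ℚ_[p]} {α m : ℤ} (hA : addValuation A = α)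
    (hx : addValuation x = m) (k : ℕ) :
    addValuation (A * x ^ k) = ((α + k * m : ℤ) : WithTop ℤ) := by
  rw [addValuation.map_mul, addValuation.map_pow, hA, hx]
  norm_cast

theorem exists_odd_addValuation_quartic {A B C x y : ℚ_[p]}
    (hA : addValuation A = (1 : ℤ)) (hB : 0 ≤ addValuation B) (hC : addValuation C = (-1 : ℤ))
    (hxy : ¬(x = 0 ∧ y = 0)) :
    ∃ d : ℤ, Odd d ∧ addValuation (A * x ^ 4 + B * x ^ 2 * y ^ 2 + C * y ^ 4) = d := by
  by_cases hx : x = 0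
  · obtain ⟨n, hn⟩ := exists_addValuation_eq_coe fun hy => hxy ⟨hx, hy⟩
    refine ⟨-1 + 4 * n, ⟨2 * n - 1, by ring⟩, ?_⟩
    simp [hx, addValuation_mul_pow hC hn]
  obtain ⟨m, hm⟩ := exists_addValuation_eq_coe hx
  by_cases hy : y = 0
  · refine ⟨1 + 4 * m, ⟨2 * m, by ring⟩, ?_⟩
    simp [hy, addValuation_mul_pow hA hm]
  obtain ⟨n, hn⟩ := exists_addValuation_eq_coe hy
  have h₁ := addValuation_mul_pow hA hm 4
  have h₃ := addValuation_mul_pow hC hn 4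
  have h₂ : ((2 * m + 2 * n : ℤ) : WithTop ℤ) ≤ addValuation (B * x ^ 2 * y ^ 2) := by
    rw [addValuation.map_mul, addValuation.map_mul, addValuation.map_pow,
      addValuation.map_pow, hm, hn, add_assoc]
    exact le_add_of_nonneg_left hB |>.trans_eq' (by norm_cast)
  have h₁₃ : addValuation (A * x ^ 4 + C * y ^ 4) =
      ((min (1 + 4 * m) (-1 + 4 * n) : ℤ) : WithTop ℤ) := by
    rw [addValuation.map_add_of_distinct_val (by rw [h₁, h₃]; norm_cast; omega), h₁, h₃]
    norm_cast
  refine ⟨min (1 + 4 * m) (-1 + 4 * n), Int.odd_iff.2 (by omega), ?_⟩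
  have h_lt : addValuation (A * x ^ 4 + C * y ^ 4) < addValuation (B * x ^ 2 * y ^ 2) :=
    h₁₃ ▸ (WithTop.coe_lt_coe.2 (by omega)).trans_le h₂
  rw [add_right_comm, addValuation.map_add_eq_of_lt_left h_lt, h₁₃]

theorem sq_ne_quartic {A B C x y : ℚ_[p]} (hA : addValuation A = (1 : ℤ))
    (hB : 0 ≤ addValuation B) (hC : addValuation C = (-1 : ℤ)) (hxy : ¬(x = 0 ∧ y = 0))
    (z : ℚ_[p]) : z ^ 2 ≠ A * x ^ 4 + B * x ^ 2 * y ^ 2 + C * y ^ 4 := by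
  obtain ⟨d, hd, hv⟩ := exists_odd_addValuation_quartic hA hB hC hxy
  exact fun hz => addValuation.map_sq_ne_of_odd z hd (hz ▸ hv)

end Padic

theorem integrality_lemma_general (B M : ℤ) (hM : M * (B ^ 2 - 4 * M) ≠ 0)
    (a : ℤ) (c : ℚ) (hac : (a : ℚ) * c = (M : ℚ))
    (ha : ∀ p : ℕ, p.Prime → padicValInt p a ≤ 1)
    (hpadic : ∀ (p : ℕ) [Fact p.Prime], ∃ x y z : ℚ_[p], ¬ (x = 0 ∧ y = 0) ∧
      z ^ 2 = (a : ℚ_[p]) * x ^ 4 + (B : ℚ_[p]) * x ^ 2 * y ^ 2 + (c : ℚ_[p]) * y ^ 4) :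
    ∃ cz : ℤ, c = (cz : ℚ) := by
  have hM₀ : (M : ℚ) ≠ 0 := by exact_mod_cast left_ne_zero_of_mul hM
  have ha₀ : (a : ℚ) ≠ 0 := left_ne_zero_of_mul (hac ▸ hM₀)
  have hc₀ : c ≠ 0 := right_ne_zero_of_mul (hac ▸ hM₀)
  refine Rat.exists_int_eq_of_forall_padicValRat_nonneg fun p hp => ?_
  have := Fact.mk hp
  by_contra! hc_neg
  have hval := padicValRat.mul (p := p) ha₀ hc₀
  rw [hac, padicValRat.of_int, padicValRat.of_int] at hval
  have ha₁ : padicValInt p a = 1 := by have := ha p hp; omega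
  have hc₁ : padicValRat p c = -1 := by omega
  obtain ⟨x, y, z, hxy, hz⟩ := hpadic p
  refine Padic.sq_ne_quartic ?_ ?_ ?_ hxy z hz
  · rw [Padic.addValuation.apply (by exact_mod_cast ha₀), Padic.valuation_intCast, ha₁]; rfl
  · exact Padic.addValuation_intCast_nonneg B
  · rw [Padic.addValuation.apply (by exact_mod_cast hc₀), Padic.valuation_ratCast, hc₁]

/-- Integrality lemma: fix integers `B, M` with `M (B² - 4M) ≠ 0`.  If
`f = a x⁴ + B x² y² + c y⁴` with `a, c ∈ ℚ`, `a c = M`, is everywhere locally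
soluble, and `a` is an integer with `0 ≤ ord_p a ≤ 1` for all primes `p`, then
`c` is an integer. -/
theorem integrality_lemma (B M : ℤ) (hM : M * (B ^ 2 - 4 * M) ≠ 0)
    (a : ℤ) (c : ℚ) (hac : (a : ℚ) * c = (M : ℚ))
    (ha : ∀ p : ℕ, p.Prime → padicValInt p a ≤ 1)
    (hreal : ∃ x y z : ℝ, ¬ (x = 0 ∧ y = 0) ∧
      z ^ 2 = (a : ℝ) * x ^ 4 + (B : ℝ) * x ^ 2 * y ^ 2 + (c : ℝ) * y ^ 4)
    (hpadic : ∀ (p : ℕ) [Fact p.Prime], ∃ x y z : ℚ_[p], ¬ (x = 0 ∧ y = 0) ∧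
      z ^ 2 = (a : ℚ_[p]) * x ^ 4 + (B : ℚ_[p]) * x ^ 2 * y ^ 2 + (c : ℚ_[p]) * y ^ 4) :
    ∃ cz : ℤ, c = (cz : ℚ) :=
  integrality_lemma_general B M hM a c hac ha hpadic
end

section
/- Let n > 1 be a squarefree integer, E_n : y^2 = x^3 - n^2 x, and let φ̂_1 : E_{1,n} → E_n be the dual 2-isogeny as above. Then #( E_n(ℚ) / φ̂_1(E_{1,n}(ℚ)) ) ≥ 4, and if rank(E_n(ℚ)) ≥ 1 and E_{1,n}(ℚ)/φ_1(E_n(ℚ)) is trivial, then #( E_n(ℚ) / φ̂_1(E_{1,n}(ℚ)) ) ≥ 8. -/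
/-!
Write `G = Eₙ(ℚ)` and `H = φ̂₁(E₁,ₙ(ℚ))`. Since `φ̂₁ ∘ φ₁ = 2`, `H ⊇ 2G`, so `G ⧸ H` is a finitely
generated group of exponent `2`, hence finite. The four rational `2`-torsion points of `Eₙ` map
injectively to `G ⧸ H`: a point of `H ∩ G[2]` is `φ̂₁ Q` with `2Q ∈ ker φ̂₁ = {∞, (0,0)}`, and `2Q = (0,0)`
would force `x(Q)² = 4n²`, i.e. `16n³` or `-16n³` a rational square, impossible for squarefree
`n > 1`; so `2Q = ∞`, and `Q ∈ E₁,ₙ(ℚ)[2] = ker φ̂₁`. If moreover `φ₁` is onto, then `H = 2G`, and a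
generator `g` of a free summand of `G` doubles the count: the parity of the `g`-coordinate vanishes
on `H` and on `G[2]`.
-/

open WeierstrassCurve

/-- The curve `Eₙ : y² = x³ - n² x` over `ℚ`. -/
def En (n : ℤ) : WeierstrassCurve.Affine ℚ :=
  { a₁ := 0, a₂ := 0, a₃ := 0, a₄ := -(n : ℚ) ^ 2, a₆ := 0 }

/-- The curve `E₁,ₙ : y² = x³ + 4n² x` over `ℚ`. -/
def E1n (n : ℤ) : WeierstrassCurve.Affine ℚ :=
  { a₁ := 0, a₂ := 0, a₃ := 0, a₄ := 4 * (n : ℚ) ^ 2, a₆ := 0 }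

open AddSubgroup

lemma Squarefree.isUnit_of_isSquare {R : Type*} [CommMonoid R] {a : R} (ha : Squarefree a)
    (hsq : IsSquare a) : IsUnit a := by
  obtain ⟨r, rfl⟩ := hsq
  exact (ha r dvd_rfl).mul (ha r dvd_rfl)

lemma mem_torsionBy_two_iff {G : Type*} [AddCommGroup G] {P : G} :
    P ∈ torsionBy G 2 ↔ 2 • P = 0 :=
  torsionBy.nsmul_iff

section TwoTorsionInQuotient

variable {G : Type*} [AddCommGroup G] {H : AddSubgroup G}

lemma finite_quotient_of_two_nsmul_mem [AddGroup.FG G] (h2 : ∀ P, 2 • P ∈ H) :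
    Finite (G ⧸ H) :=
  AddCommGroup.finite_of_fg_isAddTorsion _ fun P => by
    induction P using QuotientAddGroup.induction_on with
    | H P =>
      refine isOfFinAddOrder_iff_nsmul_eq_zero.mpr ⟨2, two_pos, ?_⟩
      rw [← QuotientAddGroup.mk_nsmul, QuotientAddGroup.eq_zero_iff]
      exact h2 P

lemma injective_mk_comp_torsionBy_two (hH : Disjoint (torsionBy G 2) H) :
    Function.Injective ((QuotientAddGroup.mk' H).comp (torsionBy G 2).subtype) :=
  (injective_iff_map_eq_zero _).mpr fun P hP =>
    Subtype.ext (disjoint_def.mp hH P.2 ((QuotientAddGroup.eq_zero_iff _).mp hP))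

lemma card_torsionBy_two_le_card_quotient [Finite (G ⧸ H)] (hH : Disjoint (torsionBy G 2) H) :
    Nat.card (torsionBy G 2) ≤ Nat.card (G ⧸ H) :=
  Nat.card_le_card_of_injective _ (injective_mk_comp_torsionBy_two hH)

lemma two_mul_card_torsionBy_two_le_card_quotient [Finite (G ⧸ H)]
    (hH : Disjoint (torsionBy G 2) H) (hdouble : ∀ P ∈ H, ∃ Q, P = 2 • Q)
    (χ : G →+ ℤ) {g : G} (hg : χ g = 1) :
    2 * Nat.card (torsionBy G 2) ≤ Nat.card (G ⧸ H) := by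
  have hχ : ∀ P ∈ torsionBy G 2, χ P = 0 := fun P hP => by
    have := congrArg χ (mem_torsionBy_two_iff.mp hP)
    rw [map_nsmul, map_zero, nsmul_eq_mul, Nat.cast_ofNat] at this
    omega
  let f : torsionBy G 2 × Fin 2 → G ⧸ H := fun p => ((p.1 + (p.2 : ℕ) • g : G) : G ⧸ H)
  have hf : Function.Injective f := by
    rintro ⟨P, i⟩ ⟨P', i'⟩ hPP'
    have hdiff := QuotientAddGroup.eq.mp hPP'
    obtain rfl : i = i' := by
      obtain ⟨Q, hQ⟩ := hdouble _ hdiff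
      have := congrArg χ hQ
      simp only [map_add, map_neg, map_nsmul, hχ P P.2, hχ P' P'.2, hg, nsmul_eq_mul] at this
      omega
    refine Prod.ext (injective_mk_comp_torsionBy_two hH ?_) rfl
    simp only [AddMonoidHom.comp_apply, coe_subtype, QuotientAddGroup.mk'_apply,
      QuotientAddGroup.eq]
    convert hdiff using 1
    abel
  calc 2 * Nat.card (torsionBy G 2) = Nat.card (torsionBy G 2 × Fin 2) := by
        rw [Nat.card_prod, Nat.card_fin, mul_comm]
    _ ≤ Nat.card (G ⧸ H) := Nat.card_le_card_of_injective f hf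

end TwoTorsionInQuotient

namespace WeierstrassCurve.Affine.Point

variable {F : Type*} [Field F] [DecidableEq F] [NeZero (2 : F)] {W : Affine F}

lemma two_nsmul_eq_zero_iff (ha₁ : W.a₁ = 0) (ha₃ : W.a₃ = 0) {P : W.Point} :
    2 • P = 0 ↔ P = 0 ∨ ∃ x h, P = some x 0 h := by
  rw [two_nsmul, add_eq_zero_iff_eq_neg]
  rcases P with _ | ⟨x, y, h⟩
  · exact iff_of_true rfl (Or.inl rfl)
  · simp only [neg_some, Affine.negY, ha₁, ha₃, some.injEq, zero_mul, sub_zero, reduceCtorEq,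
      false_or, eq_neg_iff_add_eq_zero, ← two_mul, mul_eq_zero, two_ne_zero, true_and]
    constructor
    · rintro rfl
      exact ⟨x, h, rfl, rfl⟩
    · rintro ⟨x, h, rfl, rfl⟩
      trivial

end WeierstrassCurve.Affine.Point

namespace En

variable {n : ℤ}

lemma nonsingular_of_cubic_eq_zero (hn : n ≠ 0) {x : ℚ} (hx : x ^ 3 - n ^ 2 * x = 0) :
    (En n).Nonsingular x 0 := by
  have hn' : (n : ℚ) ≠ 0 := by exact_mod_cast hn
  rw [Affine.nonsingular_iff, Affine.equation_iff]
  simp only [En]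
  refine ⟨by linear_combination -hx, Or.inl fun h => ?_⟩
  obtain rfl : x = 0 := pow_eq_zero_iff (n := 3) (by norm_num) |>.mp <|
    by linear_combination (-1 / 2 : ℚ) * hx - x / 2 * h
  exact hn' (pow_eq_zero_iff (n := 2) (by norm_num) |>.mp <| by linear_combination h)

lemma cubic_eq_zero_iff {x : ℚ} : x ^ 3 - n ^ 2 * x = 0 ↔ x = 0 ∨ x = n ∨ x = -n := by
  have : x ^ 3 - n ^ 2 * x = x * ((x - n) * (x + n)) := by ring
  simp [this, sub_eq_zero, add_eq_zero_iff_eq_neg]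

lemma mem_torsionBy_two_iff {P : (En n).Point} :
    P ∈ torsionBy (En n).Point 2 ↔ P = 0 ∨ ∃ x h, P = .some x 0 h := by
  rw [_root_.mem_torsionBy_two_iff, Affine.Point.two_nsmul_eq_zero_iff rfl rfl]

lemma card_torsionBy_two (hn : n ≠ 0) : Nat.card (torsionBy (En n).Point 2) = 4 := by
  have hn' : (n : ℚ) ≠ 0 := by exact_mod_cast hn
  have h : ∀ x : ℚ, x ^ 3 - n ^ 2 * x = 0 → (En n).Nonsingular x 0 :=
    fun _ => nonsingular_of_cubic_eq_zero hn
  have hset : (torsionBy (En n).Point 2 : Set (En n).Point) =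
      {0, .some 0 0 (h 0 (by ring)), .some n 0 (h n (by ring)),
        .some (-n) 0 (h (-n) (by ring))} := by
    ext P
    rw [SetLike.mem_coe, mem_torsionBy_two_iff]
    simp only [Set.mem_insert_iff, Set.mem_singleton_iff]
    constructor
    · rintro (hP | ⟨x, hx, rfl⟩)
      · exact Or.inl hP
      have hcubic : x ^ 3 - n ^ 2 * x = 0 := by
        have := hx.1
        rw [Affine.equation_iff] at this
        simp only [En] at this
        linear_combination -this
      rcases cubic_eq_zero_iff.mp hcubic with rfl | rfl | rfl
      · exact Or.inr (Or.inl rfl)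
      · exact Or.inr (Or.inr (Or.inl rfl))
      · exact Or.inr (Or.inr (Or.inr rfl))
    · rintro (hP | hP | hP | hP)
      · exact Or.inl hP
      all_goals exact Or.inr ⟨_, _, hP⟩
  rw [← SetLike.coe_sort_coe, Nat.card_coe_set_eq, hset, Set.ncard_insert_of_notMem,
    Set.ncard_insert_of_notMem, Set.ncard_pair]
  all_goals simp [hn, hn'.symm, CharZero.eq_neg_self_iff]

end En

namespace E1n

variable {n : ℤ}

lemma equation_iff {x y : ℚ} : (E1n n).Equation x y ↔ y ^ 2 = x ^ 3 + 4 * n ^ 2 * x := by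
  rw [Affine.equation_iff]
  simp only [E1n]
  constructor <;> intro h <;> linear_combination h

lemma two_nsmul_eq_zero_iff (hn : n ≠ 0) {Q : (E1n n).Point} :
    2 • Q = 0 ↔ Q = 0 ∨ ∃ h, Q = .some 0 0 h := by
  rw [Affine.Point.two_nsmul_eq_zero_iff rfl rfl]
  refine or_congr_right ⟨?_, fun ⟨h, hQ⟩ => ⟨0, h, hQ⟩⟩
  rintro ⟨x, h, rfl⟩
  have hn' : (n : ℚ) ≠ 0 := by exact_mod_cast hn
  obtain rfl : x = 0 := by
    have : x * (x ^ 2 + 4 * n ^ 2) = 0 := by linear_combination -(equation_iff.mp h.1)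
    exact (mul_eq_zero.mp this).resolve_right (by positivity)
  exact ⟨h, rfl⟩

lemma sq_ne_of_equation (hn : 1 < n) (hsf : Squarefree n) {x y : ℚ}
    (h : (E1n n).Equation x y) : x ^ 2 ≠ 4 * n ^ 2 := by
  rw [equation_iff] at h
  have hn0 : (0 : ℚ) < n := by exact_mod_cast (by omega : (0 : ℤ) < n)
  intro hx
  have : (x - 2 * n) * (x + 2 * n) = 0 := by linear_combination hx
  rcases mul_eq_zero.mp this with hx | hx
  · obtain rfl : x = 2 * n := by linear_combination hx
    have hsq : IsSquare (n : ℚ) := ⟨y / (4 * n), by field_simp; linear_combination -h⟩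
    have := hsf.isUnit_of_isSquare (Rat.isSquare_intCast_iff.mp hsq)
    rcases Int.isUnit_iff.mp this with rfl | rfl <;> omega
  · obtain rfl : x = -(2 * n) := by linear_combination hx
    nlinarith [sq_nonneg y, pow_pos hn0 3]

lemma two_nsmul_ne_some_zero_zero (hn : 1 < n) (hsf : Squarefree n) (Q : (E1n n).Point)
    (h : (E1n n).Nonsingular 0 0) : 2 • Q ≠ .some 0 0 h := by
  rw [two_nsmul]
  rcases Q with _ | ⟨x, y, hQ⟩
  · exact (Affine.Point.some_ne_zero h).symm
  by_cases hy : y = (E1n n).negY x y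
  · rw [Affine.Point.add_self_of_Y_eq hy]
    exact (Affine.Point.some_ne_zero h).symm
  rw [Affine.Point.add_self_of_Y_ne hy, ne_eq, Affine.Point.some.injEq, not_and]
  intro hx _
  have hy0 : y ≠ 0 := by
    simp only [Affine.negY, E1n] at hy
    intro h0
    exact hy (by linear_combination 2 * h0)
  have hslope : (E1n n).slope x x y y = (3 * x ^ 2 + 4 * n ^ 2) / (2 * y) := by
    rw [Affine.slope_of_Y_ne rfl hy]
    simp only [Affine.negY, E1n]
    ring
  rw [Affine.addX, hslope] at hx
  simp only [E1n] at hx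
  field_simp at hx
  apply sq_ne_of_equation hn hsf hQ.1
  -- `x(2Q) = (x² - 4n²)² / (4y²)`
  have : (x ^ 2 - 4 * n ^ 2) ^ 2 = 0 := by
    linear_combination hx + 8 * x * equation_iff.mp hQ.1
  exact sub_eq_zero.mp (pow_eq_zero_iff two_ne_zero |>.mp this)

end E1n

lemma disjoint_torsionBy_two_range {n : ℤ} (hn : 1 < n) (hsf : Squarefree n)
    {G : Type*} [AddCommGroup G] (ψ : (E1n n).Point →+ G)
    (hkerψ : ∀ Q, ψ Q = 0 ↔ Q = 0 ∨ ∃ h : (E1n n).Nonsingular 0 0, Q = .some 0 0 h) :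
    Disjoint (torsionBy G 2) ψ.range := by
  rw [disjoint_def]
  rintro _ hP ⟨Q, rfl⟩
  have h2Q : ψ (2 • Q) = 0 := by rw [map_nsmul]; exact mem_torsionBy_two_iff.mp hP
  rcases (hkerψ _).mp h2Q with h2Q | ⟨h, h2Q⟩
  · exact (hkerψ Q).mpr ((E1n.two_nsmul_eq_zero_iff (by omega)).mp h2Q)
  · exact absurd h2Q (E1n.two_nsmul_ne_some_zero_zero hn hsf Q h)

theorem card_coker_dual_isogeny_lower_bound_general (n : ℤ) (hn : 1 < n) (hsf : Squarefree n)
    (T : Type*) [AddCommGroup T] [Finite T] (r : ℕ)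
    (e : (En n).Point ≃+ T × (Fin r → ℤ))
    (φ : (En n).Point →+ (E1n n).Point) (ψ : (E1n n).Point →+ (En n).Point)
    (hψφ : ∀ P, ψ (φ P) = 2 • P)
    (hkerψ : ∀ Q, ψ Q = 0 ↔ Q = 0 ∨ ∃ h : (E1n n).Nonsingular 0 0, Q = .some 0 0 h) :
    4 ≤ Nat.card ((En n).Point ⧸ ψ.range) ∧
      (1 ≤ r → (∀ Q : (E1n n).Point, Q ∈ φ.range) →
        8 ≤ Nat.card ((En n).Point ⧸ ψ.range)) := by
  have : AddGroup.FG (En n).Point := AddGroup.fg_of_surjective (f := e.symm.toAddMonoidHom) e.symm.surjective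
  have : Finite ((En n).Point ⧸ ψ.range) :=
    finite_quotient_of_two_nsmul_mem fun P => ⟨φ P, hψφ P⟩
  have hdisj := disjoint_torsionBy_two_range hn hsf ψ hkerψ
  have hcard := En.card_torsionBy_two (n := n) (by omega)
  refine ⟨hcard ▸ card_torsionBy_two_le_card_quotient hdisj, fun hr hφ => ?_⟩
  have hdouble : ∀ P ∈ ψ.range, ∃ Q, P = 2 • Q := by
    rintro _ ⟨Q, rfl⟩
    obtain ⟨P, rfl⟩ := hφ Q
    exact ⟨P, hψφ P⟩
  let χ : (En n).Point →+ ℤ :=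
    (Pi.evalAddMonoidHom (fun _ => ℤ) ⟨0, hr⟩).comp ((AddMonoidHom.snd _ _).comp e.toAddMonoidHom)
  have := two_mul_card_torsionBy_two_le_card_quotient hdisj hdouble χ
    (g := e.symm (0, Pi.single ⟨0, hr⟩ 1)) (by simp [χ])
  omega

/-- For squarefree `n > 1`, with `φ = φ₁ : Eₙ → E₁,ₙ` the `2`-isogeny with kernel
`{∞, (0,0)}`, `ψ = φ̂₁` its dual (with kernel `{∞, (0,0)}` on rational points),
and `Eₙ(ℚ) ≅ T × ℤʳ` with `T` finite (so `r = rank Eₙ(ℚ)`):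
`#(Eₙ(ℚ)/φ̂₁(E₁,ₙ(ℚ))) ≥ 4`; and if `rank Eₙ(ℚ) ≥ 1` and `E₁,ₙ(ℚ)/φ₁(Eₙ(ℚ))` is
trivial, then `#(Eₙ(ℚ)/φ̂₁(E₁,ₙ(ℚ))) ≥ 8`. -/
theorem card_coker_dual_isogeny_lower_bound (n : ℤ) (hn : 1 < n) (hsf : Squarefree n)
    (T : Type*) [AddCommGroup T] [Finite T] (r : ℕ)
    (e : (En n).Point ≃+ T × (Fin r → ℤ))
    (φ : (En n).Point →+ (E1n n).Point) (ψ : (E1n n).Point →+ (En n).Point)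
    (hψφ : ∀ P, ψ (φ P) = 2 • P) (hφψ : ∀ Q, φ (ψ Q) = 2 • Q)
    (hkerφ : ∀ P, φ P = 0 ↔ P = 0 ∨ ∃ h : (En n).Nonsingular 0 0, P = .some 0 0 h)
    (hkerψ : ∀ Q, ψ Q = 0 ↔ Q = 0 ∨ ∃ h : (E1n n).Nonsingular 0 0, Q = .some 0 0 h) :
    4 ≤ Nat.card ((En n).Point ⧸ ψ.range) ∧
      (1 ≤ r → (∀ Q : (E1n n).Point, Q ∈ φ.range) →
        8 ≤ Nat.card ((En n).Point ⧸ ψ.range)) :=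
  card_coker_dual_isogeny_lower_bound_general n hn hsf T r e φ ψ hψφ hkerψ
end
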